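/- Let X and U be the spaces ℝᵖ and ℝᵐ, let f : X × U → X be a transition map, let ℓ : X × U → ℝ be a nonnegative stage cost, and let N ≥ 1 be a horizon. For an initial state z ∈ X define the horizon-N value V(z) = inf over control sequences (u(0),…,u(N−1)) of Σ_{τ=0}^{N−1} ℓ(x(τ),u(τ)), where x(0) = z and x(τ+1) = f(x(τ),u(τ)). Suppose the infimum defining V(z) is attained by a sequence u* with trajectory x*, and suppose there exists w ∈ U with ℓ(x*(N), w) = 0. Then V(f(z, u*(0))) ≤ V(z) − ℓ(z, u*(0)). -/

import Mathlib

open Fin.NatCast in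
/-- The predicted state trajectory from initial state `z` under the control
sequence `u = (u(0),…,u(N−1))`: `x(0) = z`, `x(τ+1) = f(x(τ),u(τ))`. -/
noncomputable def mpcTraj {p m N : ℕ} [NeZero N]
    (f : (Fin p → ℝ) → (Fin m → ℝ) → Fin p → ℝ)
    (z : Fin p → ℝ) (u : Fin N → Fin m → ℝ) : ℕ → Fin p → ℝ
  | 0 => z
  | τ + 1 => f (mpcTraj f z u τ) (u τ)

open Fin.NatCast in
/-- The horizon-`N` cost `Σ_{τ=0}^{N−1} ℓ(x(τ),u(τ))` of the control sequence `u`. -/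
noncomputable def mpcCost {p m N : ℕ} [NeZero N]
    (f : (Fin p → ℝ) → (Fin m → ℝ) → Fin p → ℝ)
    (ℓ : (Fin p → ℝ) → (Fin m → ℝ) → ℝ)
    (z : Fin p → ℝ) (u : Fin N → Fin m → ℝ) : ℝ :=
  ∑ τ ∈ Finset.range N, ℓ (mpcTraj f z u τ) (u τ)

/-- The horizon-`N` value function `V(z) = inf_u Σ_{τ=0}^{N−1} ℓ(x(τ),u(τ))`. -/
noncomputable def mpcValue {p m : ℕ} (N : ℕ) [NeZero N]
    (f : (Fin p → ℝ) → (Fin m → ℝ) → Fin p → ℝ)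
    (ℓ : (Fin p → ℝ) → (Fin m → ℝ) → ℝ)
    (z : Fin p → ℝ) : ℝ :=
  ⨅ u : Fin N → Fin m → ℝ, mpcCost f ℓ z u

/-!
Shifting `u*` by one step and appending `w` gives a control sequence from `f(z, u*(0))` whose
cost is `V(z) - ℓ(z, u*(0)) + ℓ(x*(N), w) = V(z) - ℓ(z, u*(0))`. The value there is at most
this cost since `ℓ ≥ 0` bounds the costs below (without that, the real `⨅` is a junk `0`).
-/

section ShiftedControl

open Fin.NatCast

variable {p m n : ℕ} (f : (Fin p → ℝ) → (Fin m → ℝ) → Fin p → ℝ)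

def shiftControl {α : Type*} (u : Fin (n + 1) → α) (w : α) : Fin (n + 1) → α :=
  Fin.snoc (Fin.tail u) w

theorem shiftControl_natCast {α : Type*} (u : Fin (n + 1) → α) (w : α) {τ : ℕ} (hτ : τ < n) :
    shiftControl u w τ = u ((τ + 1 : ℕ) : Fin (n + 1)) := by
  have hcast : ((τ : ℕ) : Fin (n + 1)) = Fin.castSucc ⟨τ, hτ⟩ :=
    Fin.ext (Fin.val_cast_of_lt (by omega))
  have hsucc : ((τ + 1 : ℕ) : Fin (n + 1)) = Fin.succ ⟨τ, hτ⟩ :=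
    Fin.ext (Fin.val_cast_of_lt (by omega))
  rw [shiftControl, hcast, hsucc, Fin.snoc_castSucc, Fin.tail]

theorem shiftControl_natCast_self {α : Type*} (u : Fin (n + 1) → α) (w : α) :
    shiftControl u w n = w := by
  rw [shiftControl, Fin.natCast_eq_last, Fin.snoc_last]

theorem mpcTraj_shiftControl (z : Fin p → ℝ) (u : Fin (n + 1) → Fin m → ℝ) (w : Fin m → ℝ)
    {τ : ℕ} (hτ : τ ≤ n) :
    mpcTraj f (f z (u 0)) (shiftControl u w) τ = mpcTraj f z u (τ + 1) := by
  induction τ with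
  | zero => simp [mpcTraj]
  | succ τ ih =>
    rw [mpcTraj, ih (by omega), shiftControl_natCast u w (by omega)]
    rfl

theorem mpcCost_shiftControl_add (ℓ : (Fin p → ℝ) → (Fin m → ℝ) → ℝ) (z : Fin p → ℝ)
    (u : Fin (n + 1) → Fin m → ℝ) (w : Fin m → ℝ) :
    mpcCost f ℓ (f z (u 0)) (shiftControl u w) + ℓ z (u 0)
      = mpcCost f ℓ z u + ℓ (mpcTraj f z u (n + 1)) w := by
  have hshift : ∀ τ ∈ Finset.range n,
      ℓ (mpcTraj f (f z (u 0)) (shiftControl u w) τ) (shiftControl u w τ)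
        = ℓ (mpcTraj f z u (τ + 1)) (u ((τ + 1 : ℕ) : Fin (n + 1))) := fun τ hτ => by
    have hτ := Finset.mem_range.mp hτ
    rw [mpcTraj_shiftControl f z u w hτ.le, shiftControl_natCast u w hτ]
  unfold mpcCost
  rw [Finset.sum_range_succ, Finset.sum_range_succ', Finset.sum_congr rfl hshift,
    shiftControl_natCast_self, mpcTraj_shiftControl f z u w le_rfl]
  simp only [mpcTraj, Nat.cast_zero]
  ring

end ShiftedControl

theorem mpcValue_le_mpcCost {p m N : ℕ} [NeZero N]
    (f : (Fin p → ℝ) → (Fin m → ℝ) → Fin p → ℝ) {ℓ : (Fin p → ℝ) → (Fin m → ℝ) → ℝ}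
    (hℓ : ∀ x u, 0 ≤ ℓ x u) (z : Fin p → ℝ) (u : Fin N → Fin m → ℝ) :
    mpcValue N f ℓ z ≤ mpcCost f ℓ z u :=
  ciInf_le ⟨0, by
    rintro _ ⟨v, rfl⟩
    exact Finset.sum_nonneg fun _ _ => hℓ _ _⟩ u

/-- Recursive-feasibility inequality: if the infimum defining `V(z)` is attained by
`u*` with trajectory `x*`, and some control `w` gives zero terminal stage cost
`ℓ(x*(N),w) = 0`, then `V(f(z,u*(0))) ≤ V(z) − ℓ(z,u*(0))`. -/
theorem stmt15 {p m N : ℕ} [NeZero N]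
    (f : (Fin p → ℝ) → (Fin m → ℝ) → Fin p → ℝ)
    (ℓ : (Fin p → ℝ) → (Fin m → ℝ) → ℝ)
    (hℓ : ∀ x u, 0 ≤ ℓ x u)
    (z : Fin p → ℝ) (ustar : Fin N → Fin m → ℝ)
    (hopt : mpcCost f ℓ z ustar = mpcValue N f ℓ z)
    (w : Fin m → ℝ) (hw : ℓ (mpcTraj f z ustar N) w = 0) :
    mpcValue N f ℓ (f z (ustar 0)) ≤ mpcValue N f ℓ z - ℓ z (ustar 0) := by
  obtain ⟨n, rfl⟩ : ∃ n, N = n + 1 := Nat.exists_eq_succ_of_ne_zero (NeZero.ne N)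
  have hcost := mpcCost_shiftControl_add f ℓ z ustar w
  rw [hw, add_zero, hopt] at hcost
  linarith [mpcValue_le_mpcCost f hℓ (f z (ustar 0)) (shiftControl ustar w)]
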